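/- arXiv:1810.04252 — 4 statements merged into one kernel-verified Lean document; each statement's English description precedes it below -/
import Mathlib

section
/- Let G be a connected even graph and let 𝒞 be a cycle decomposition of G whose cycle intersection graph CI(G) is a tree (in particular, any two cycles of 𝒞 intersect in at most one vertex). Then 𝒞 is the unique cycle decomposition of G. -/
open SimpleGraph

variable {V : Type*}

/-- A graph is *even* if every vertex has even degree. -/
def IsEvenGraph (G : SimpleGraph V) : Prop :=
  ∀ v : V, Even (G.neighborSet v).ncard

/-- A subgraph is a *cycle* if it is connected and every one of its vertices has degree 2. -/
def IsCycleSubgraph {G : SimpleGraph V} (H : G.Subgraph) : Prop :=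
  H.Connected ∧ ∀ v ∈ H.verts, (H.neighborSet v).ncard = 2

/-- A *cycle decomposition* of `G` is a family of cycle subgraphs such that every edge of `G`
lies in exactly one of them. -/
def IsCycleDecomposition (G : SimpleGraph V) (𝒞 : Set G.Subgraph) : Prop :=
  (∀ C ∈ 𝒞, IsCycleSubgraph C) ∧ ∀ e ∈ G.edgeSet, ∃! C, C ∈ 𝒞 ∧ e ∈ SimpleGraph.Subgraph.edgeSet C

/-- The edges of the cycle intersection *multigraph* of a cycle decomposition `𝒞`:
one edge joining `C` and `C'` for each pair of distinct cycles `C ≠ C'` of `𝒞` and each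
vertex `v` lying on both (the edge is labelled by `v`). -/
def CIEdges (G : SimpleGraph V) (𝒞 : Set G.Subgraph) : Set (Sym2 G.Subgraph × V) :=
  {p | ∃ C ∈ 𝒞, ∃ C' ∈ 𝒞, ∃ v : V, C ≠ C' ∧
    v ∈ C.verts ∩ SimpleGraph.Subgraph.verts C' ∧ p = (s(C, C'), v)}

/-- The underlying simple graph of the cycle intersection graph of a cycle decomposition:
two distinct cycles are adjacent iff they share a vertex. -/
def CIGraph (G : SimpleGraph V) (𝒞 : Set G.Subgraph) : SimpleGraph 𝒞 where
  Adj C D := C ≠ D ∧ ((C : G.Subgraph).verts ∩ (D : G.Subgraph).verts).Nonempty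
  symm := by
    constructor
    rintro C D ⟨h1, h2⟩
    exact ⟨h1.symm, by rwa [Set.inter_comm] at h2⟩
  loopless := by constructor; rintro C ⟨h1, _⟩; exact h1 rfl

/-- The cycle intersection graph is *simple* iff any two distinct cycles of the decomposition
intersect in at most one vertex. -/
def CISimple (G : SimpleGraph V) (𝒞 : Set G.Subgraph) : Prop :=
  ∀ C ∈ 𝒞, ∀ D ∈ 𝒞, C ≠ D →
    ((C : G.Subgraph).verts ∩ (D : G.Subgraph).verts).ncard ≤ 1

/-- `S` is a decycling set of `G` iff `G - S` is acyclic. -/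
def IsDecyclingSet (G : SimpleGraph V) (S : Set V) : Prop :=
  (G.induce Sᶜ).IsAcyclic

/-- The decycling number of `G`: the minimum size of a decycling set. -/
noncomputable def decyclingNumber (G : SimpleGraph V) : ℕ :=
  sInf {n | ∃ S : Set V, IsDecyclingSet G S ∧ S.ncard = n}

/-- The *size* of a spanning forest: its number of edges plus its number of isolated vertices. -/
noncomputable def forestSize {W : Type*} (F : SimpleGraph W) : ℕ :=
  F.edgeSet.ncard + {v : W | ∀ w, ¬ F.Adj v w}.ncard

/-- The minimum size of a spanning forest of `H` (a spanning forest is an acyclic spanning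
subgraph; note a subgraph `F ≤ H` on the same vertex type is automatically spanning). -/
noncomputable def MSF {W : Type*} (H : SimpleGraph W) : ℕ :=
  sInf {n | ∃ F ≤ H, F.IsAcyclic ∧ forestSize F = n}

/-!
Every cycle `H` of `G` already belongs to `𝒞`. Otherwise `H` shares edges with two cycles
`C₀ ≠ C₁` of `𝒞`. Deleting the first edge `C₀C` of the tree path from `C₀` to `C₁` splits `𝒞`
into two subtrees; since every edge of `G` lies on a cycle of `𝒞` and `C₀`, `C` share a single
vertex `v`, the vertices `U` of the cycles on the side of `C₀` are such that every edge of `G`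
leaving `U` starts at `v`. A cycle cannot be cut in this way at a single vertex: the edges of `H`
inside `U` would form a graph in which `v` is the only vertex of odd degree. So every cycle
decomposition `𝒟` satisfies `𝒟 ⊆ 𝒞`, and since both partition the edges, `𝒟 = 𝒞`.
-/

section

variable {G : SimpleGraph V}

lemma IsCycleSubgraph.neighborSet_nonempty {H : G.Subgraph} (hH : IsCycleSubgraph H) {x : V}
    (hx : x ∈ H.verts) : (H.neighborSet x).Nonempty :=
  Set.nonempty_of_ncard_ne_zero (by rw [hH.2 x hx]; exact two_ne_zero)

lemma IsCycleSubgraph.exists_adj {H : G.Subgraph} (hH : IsCycleSubgraph H) :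
    ∃ x y, H.Adj x y :=
  let ⟨x, hx⟩ := hH.1.nonempty
  let ⟨y, hy⟩ := hH.neighborSet_nonempty hx
  ⟨x, y, hy⟩

lemma IsCycleSubgraph.even_ncard_neighborSet {H : G.Subgraph} (hH : IsCycleSubgraph H) (x : V) :
    Even (H.neighborSet x).ncard := by
  by_cases hx : x ∈ H.verts
  · rw [hH.2 x hx]; exact even_two
  · rw [Set.eq_empty_of_forall_notMem (s := H.neighborSet x) fun y hy => hx (H.edge_vert hy),
      Set.ncard_empty]
    exact Even.zero

lemma IsCycleSubgraph.eq_of_adj_le {H C : G.Subgraph} (hH : IsCycleSubgraph H)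
    (hC : IsCycleSubgraph C) (hle : H.Adj ≤ C.Adj) : H = C := by
  have hverts : H.verts ⊆ C.verts := fun x hx =>
    let ⟨_, hy⟩ := hH.neighborSet_nonempty hx
    C.edge_vert (hle _ _ hy)
  have hnbr : ∀ x ∈ H.verts, H.neighborSet x = C.neighborSet x := fun x hx =>
    Set.eq_of_subset_of_ncard_le (hle x) (by rw [hH.2 x hx, hC.2 x (hverts hx)])
      (Set.finite_of_ncard_ne_zero (by rw [hC.2 x (hverts hx)]; exact two_ne_zero))
  -- `H.verts` is closed under `C`-adjacency, and `C` is connected.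
  have hCH : C.verts ⊆ H.verts := by
    intro y hy
    by_contra hyH
    obtain ⟨x, hx⟩ := hH.1.nonempty
    obtain ⟨p⟩ := hC.1.preconnected ⟨x, hverts hx⟩ ⟨y, hy⟩
    obtain ⟨d, -, hd, hd'⟩ := p.exists_boundary_dart {z : C.verts | (z : V) ∈ H.verts} hx hyH
    have hsnd : (d.snd : V) ∈ H.neighborSet d.fst := by rw [hnbr _ hd]; exact d.adj
    exact hd' (H.edge_vert hsnd.symm)
  ext x y
  · exact ⟨fun hx => hverts hx, fun hx => hCH hx⟩
  · refine ⟨hle x y, fun hxy => ?_⟩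
    change y ∈ H.neighborSet x
    rw [hnbr x (hCH (C.edge_vert hxy))]
    exact hxy

namespace SimpleGraph.Subgraph

lemma even_ncard_neighborSet_inter [Fintype V] (H : G.Subgraph)
    (heven : ∀ x, Even (H.neighborSet x).ncard) {U : Set V} {v : V} (hv : v ∈ U)
    (hU : ∀ x y, H.Adj x y → x ∈ U → x ≠ v → y ∈ U) : Even (H.neighborSet v ∩ U).ncard := by
  classical
  set K := (H.induce U).spanningCoe
  have hK : ∀ x ∈ U, K.neighborSet x = H.neighborSet x ∩ U := by
    intro x hx
    ext y
    simp [K, hx, and_comm]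
  have hdeg : ∀ x, K.degree x = (K.neighborSet x).ncard := fun x => by
    rw [← card_neighborSet_eq_degree, ← Nat.card_coe_set_eq, Nat.card_eq_fintype_card]
  by_contra hodd
  rw [Nat.not_even_iff_odd, ← hK v hv, ← hdeg] at hodd
  obtain ⟨w, hwv, hw⟩ := K.exists_ne_odd_degree_of_exists_odd_degree v hodd
  rw [hdeg, ← Nat.not_even_iff_odd] at hw
  apply hw
  by_cases hwU : w ∈ U
  · rw [hK w hwU, (Set.inter_eq_left (s := H.neighborSet w)).mpr (fun y hy => hU w y hy hwU hwv)]
    exact heven w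
  · have hempty : K.neighborSet w = ∅ := by
      ext y
      simp [K, hwU]
    rw [hempty, Set.ncard_empty]
    exact Even.zero

end SimpleGraph.Subgraph

lemma IsCycleSubgraph.verts_subset_or_inter_subset [Fintype V] {H : G.Subgraph}
    (hH : IsCycleSubgraph H) {U : Set V} {v : V}
    (hU : ∀ x y, H.Adj x y → x ∈ U → x ≠ v → y ∈ U) : H.verts ⊆ U ∨ H.verts ∩ U ⊆ {v} := by
  by_contra! h
  obtain ⟨b, hbH, hbU⟩ := Set.not_subset.mp h.1
  obtain ⟨a, ⟨haH, haU⟩, hav⟩ := Set.not_subset.mp h.2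
  obtain ⟨p⟩ := hH.1.preconnected ⟨a, haH⟩ ⟨b, hbH⟩
  -- Leaving `U \ {v}` along `p` and re-entering `U` along `p.reverse` both happen at `v`.
  obtain ⟨d, -, ⟨hdU, hdv⟩, hd⟩ :=
    p.exists_boundary_dart {x | (x : V) ∈ U ∧ (x : V) ≠ v} ⟨haU, hav⟩ fun h => hbU h.1
  obtain ⟨d', -, hd'U, hd'⟩ :=
    p.reverse.exists_boundary_dart {x | (x : V) ∉ U} hbU (not_not.mpr haU)
  have hsndU : (d.snd : V) ∈ U := hU _ _ d.adj hdU hdv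
  have hsnd : (d.snd : V) = v := by_contra fun hne => hd ⟨hsndU, hne⟩
  have hsnd' : (d'.snd : V) = v :=
    by_contra fun hne => hd'U (hU _ _ d'.adj.symm (not_not.mp hd') hne)
  set z : V := d.fst.1
  set z' : V := d'.fst.1
  have hz : H.Adj v z := hsnd ▸ d.adj.symm
  have hz' : H.Adj v z' := hsnd' ▸ d'.adj.symm
  have hz'U : z' ∉ U := hd'U
  have hN : H.neighborSet v = {z, z'} := by
    refine (Set.eq_of_subset_of_ncard_le ?_ ?_ (Set.toFinite _)).symm
    · rintro y (rfl | rfl)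
      exacts [hz, hz']
    · rw [hH.2 v (H.edge_vert hz), Set.ncard_pair fun h : z = z' => hz'U (h ▸ hdU)]
  have hodd := H.even_ncard_neighborSet_inter hH.even_ncard_neighborSet (hsnd ▸ hsndU) hU
  rw [hN, Set.insert_inter_of_mem hdU, Set.singleton_inter_eq_empty.mpr hz'U, insert_empty_eq,
    Set.ncard_singleton] at hodd
  exact Nat.not_even_one hodd

lemma SimpleGraph.IsAcyclic.exists_adj_not_reachable_deleteEdges {α : Type*}
    {T : SimpleGraph α} (hT : T.IsAcyclic) {a b : α} (hab : T.Reachable a b) (hne : a ≠ b) :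
    ∃ c, T.Adj a c ∧ ¬ (T.deleteEdges {s(a, c)}).Reachable a b := by
  classical
  obtain ⟨p, hp⟩ := hab.some.toPath
  obtain ⟨c, h, q, rfl⟩ := p.exists_eq_cons_of_ne hne
  have ha : a ∉ q.support := ((Walk.cons_isPath_iff h q).mp hp).2
  have hq : ∀ e ∈ q.edges, e ∉ ({s(a, c)} : Set (Sym2 α)) := by
    rintro e he rfl
    exact ha (q.fst_mem_support_of_mem_edges he)
  exact ⟨c, h, fun hreach =>
    isBridge_iff.mp (isAcyclic_iff_forall_adj_isBridge.mp hT h)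
      (hreach.trans ⟨(q.toDeleteEdges _ hq).reverse⟩)⟩

lemma IsCycleDecomposition.exists_mem_adj {𝒞 : Set G.Subgraph} (hdec : IsCycleDecomposition G 𝒞)
    ⦃x y : V⦄ (h : G.Adj x y) : ∃ C ∈ 𝒞, C.Adj x y :=
  let ⟨C, ⟨hC, hCe⟩, _⟩ := hdec.2 s(x, y) h
  ⟨C, hC, hCe⟩

lemma IsCycleDecomposition.eq_of_subset {𝒞 𝒟 : Set G.Subgraph} (h𝒟 : IsCycleDecomposition G 𝒟)
    (h𝒞 : IsCycleDecomposition G 𝒞) (hsub : 𝒟 ⊆ 𝒞) : 𝒟 = 𝒞 := by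
  refine hsub.antisymm fun C hC => ?_
  obtain ⟨x, y, hxy⟩ := (h𝒞.1 C hC).exists_adj
  obtain ⟨D, hD, hDxy⟩ := h𝒟.exists_mem_adj (C.adj_sub hxy)
  rwa [(h𝒞.2 s(x, y) (C.adj_sub hxy)).unique ⟨hC, hxy⟩ ⟨hsub hD, hDxy⟩]

variable {𝒞 : Set G.Subgraph}

lemma exists_separation_of_CI_isTree [Finite V] (hcover : ∀ ⦃x y⦄, G.Adj x y → ∃ C ∈ 𝒞, C.Adj x y)
    (hsimple : CISimple G 𝒞) (htree : (CIGraph G 𝒞).IsTree) {C₀ C₁ : G.Subgraph}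
    (h₀ : C₀ ∈ 𝒞) (h₁ : C₁ ∈ 𝒞) (hne : C₀ ≠ C₁) :
    ∃ (U : Set V) (v : V), v ∈ U ∧ (∀ x y, G.Adj x y → x ∈ U → x ≠ v → y ∈ U) ∧
      C₀.verts ⊆ U ∧ C₁.verts ∩ U ⊆ {v} := by
  set c₀ : 𝒞 := ⟨C₀, h₀⟩
  obtain ⟨c, hadj, hc₁⟩ := htree.isAcyclic.exists_adj_not_reachable_deleteEdges
    (htree.connected.preconnected c₀ ⟨C₁, h₁⟩) (fun h => hne (congrArg Subtype.val h))
  set T := (CIGraph G 𝒞).deleteEdges {s(c₀, c)}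
  have hc : ¬ T.Reachable c₀ c :=
    isBridge_iff.mp (isAcyclic_iff_forall_adj_isBridge.mp htree.isAcyclic hadj)
  obtain ⟨v, hv₀, hvc⟩ := hadj.2
  have hcross : ∀ D D' : 𝒞, T.Reachable c₀ D → ¬ T.Reachable c₀ D' →
      ∀ x ∈ (D : G.Subgraph).verts, x ∈ (D' : G.Subgraph).verts → x = v := by
    intro D D' hD hD' x hxD hxD'
    have hDD' : D ≠ D' := by rintro rfl; exact hD' hD
    have he : s(D, D') = s(c₀, c) := by
      by_contra he
      have hDD'adj : T.Adj D D' := deleteEdges_adj.mpr ⟨⟨hDD', x, hxD, hxD'⟩, he⟩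
      exact hD' (hD.trans hDD'adj.reachable)
    rcases Sym2.eq_iff.mp he with ⟨rfl, rfl⟩ | ⟨rfl, -⟩
    · exact ((Set.ncard_le_one (Set.toFinite _)).mp
        (hsimple _ c₀.2 _ D'.2 fun h => hDD' (Subtype.ext h))) x ⟨hxD, hxD'⟩ v ⟨hv₀, hvc⟩
    · exact absurd hD hc
  refine ⟨{x | ∃ D : 𝒞, T.Reachable c₀ D ∧ x ∈ (D : G.Subgraph).verts}, v, ⟨c₀, .rfl, hv₀⟩,
    ?_, fun x hx => ⟨c₀, .rfl, hx⟩, ?_⟩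
  · rintro x y hxy ⟨D, hD, hxD⟩ hxv
    obtain ⟨D', hD'𝒞, hxy'⟩ := hcover hxy
    by_cases hD' : T.Reachable c₀ ⟨D', hD'𝒞⟩
    · exact ⟨_, hD', D'.edge_vert hxy'.symm⟩
    · exact absurd (hcross D _ hD hD' x hxD (D'.edge_vert hxy')) hxv
  · rintro x ⟨hx₁, D, hD, hxD⟩
    exact hcross D ⟨C₁, h₁⟩ hD hc₁ x hxD hx₁

lemma eq_of_adj_of_isCycleSubgraph [Fintype V] (hcover : ∀ ⦃x y⦄, G.Adj x y → ∃ C ∈ 𝒞, C.Adj x y)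
    (hsimple : CISimple G 𝒞) (htree : (CIGraph G 𝒞).IsTree) {H : G.Subgraph}
    (hH : IsCycleSubgraph H) {C₀ C₁ : G.Subgraph} (h₀ : C₀ ∈ 𝒞) (h₁ : C₁ ∈ 𝒞) {x₀ y₀ x₁ y₁ : V}
    (hH₀ : H.Adj x₀ y₀) (hC₀ : C₀.Adj x₀ y₀) (hH₁ : H.Adj x₁ y₁) (hC₁ : C₁.Adj x₁ y₁) :
    C₀ = C₁ := by
  by_contra hne
  obtain ⟨U, v, -, hU, hU₀, hU₁⟩ := exists_separation_of_CI_isTree hcover hsimple htree h₀ h₁ hne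
  rcases hH.verts_subset_or_inter_subset (fun x y h => hU x y (H.adj_sub h)) with hHU | hHU
  · have hx₁ := hU₁ ⟨C₁.edge_vert hC₁, hHU (H.edge_vert hH₁)⟩
    have hy₁ := hU₁ ⟨C₁.edge_vert hC₁.symm, hHU (H.edge_vert hH₁.symm)⟩
    exact (H.adj_sub hH₁).ne (hx₁.trans hy₁.symm)
  · have hx₀ := hHU ⟨H.edge_vert hH₀, hU₀ (C₀.edge_vert hC₀)⟩
    have hy₀ := hHU ⟨H.edge_vert hH₀.symm, hU₀ (C₀.edge_vert hC₀.symm)⟩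
    exact (H.adj_sub hH₀).ne (hx₀.trans hy₀.symm)

lemma mem_of_isCycleSubgraph [Fintype V] (hdec : IsCycleDecomposition G 𝒞) (hsimple : CISimple G 𝒞)
    (htree : (CIGraph G 𝒞).IsTree) {H : G.Subgraph} (hH : IsCycleSubgraph H) : H ∈ 𝒞 := by
  obtain ⟨x₀, y₀, hH₀⟩ := hH.exists_adj
  obtain ⟨C₀, h₀, hC₀⟩ := hdec.exists_mem_adj (H.adj_sub hH₀)
  have hle : H.Adj ≤ C₀.Adj := fun x y hH₁ => by
    obtain ⟨C₁, h₁, hC₁⟩ := hdec.exists_mem_adj (H.adj_sub hH₁)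
    rwa [eq_of_adj_of_isCycleSubgraph hdec.exists_mem_adj hsimple htree hH h₀ h₁ hH₀ hC₀ hH₁ hC₁]
  rwa [hH.eq_of_adj_le (hdec.1 C₀ h₀) hle]

end

theorem cycleDecomposition_unique_of_CI_isTree_general [Fintype V]
    (G : SimpleGraph V)
    (𝒞 : Set G.Subgraph) (hdec : IsCycleDecomposition G 𝒞)
    (hsimple : CISimple G 𝒞) (htree : (CIGraph G 𝒞).IsTree) :
    ∀ 𝒟 : Set G.Subgraph, IsCycleDecomposition G 𝒟 → 𝒟 = 𝒞 :=
  fun _ h𝒟 => h𝒟.eq_of_subset hdec fun _ hD => mem_of_isCycleSubgraph hdec hsimple htree (h𝒟.1 _ hD)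

/-- If the cycle intersection graph of a cycle decomposition `𝒞` of a
connected even graph `G` is a tree (in particular it is simple, i.e. any two cycles of `𝒞`
intersect in at most one vertex), then `𝒞` is the unique cycle decomposition of `G`. -/
theorem cycleDecomposition_unique_of_CI_isTree [Fintype V]
    (G : SimpleGraph V) (hconn : G.Connected) (heven : IsEvenGraph G)
    (𝒞 : Set G.Subgraph) (hdec : IsCycleDecomposition G 𝒞)
    (hsimple : CISimple G 𝒞) (htree : (CIGraph G 𝒞).IsTree) :
    ∀ 𝒟 : Set G.Subgraph, IsCycleDecomposition G 𝒟 → 𝒟 = 𝒞 :=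
  cycleDecomposition_unique_of_CI_isTree_general G 𝒞 hdec hsimple htree
end

section
/- Let G be a connected even graph and let 𝒞 be a cycle decomposition of G whose cycle intersection graph CI(G) is a tree. Then ∇(G) ≤ |MSF(CI(G))|, the size of a minimum spanning forest of CI(G). -/
/-!
Take a minimum spanning forest `F` of `CI(G)` and choose a common vertex of the two ends of every
edge of `F`, together with one vertex of every cycle isolated in `F`. This set `S` has at most
`|F|` elements and meets every member of `𝒞`. It is decycling because every cycle `Z` of `G`
contains a whole member of `𝒞`. Otherwise the members of `𝒞` sharing an edge with `Z` span a
nonempty finite subforest of `CI(G)` in which every member `D` has two neighbours: `Z` leaves `D`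
at two distinct vertices, continuing along another member at each, and these two members differ
because `D` meets any other member in at most one vertex.
-/

open SimpleGraph

variable {V : Type*}

namespace SimpleGraph

/-- A longest path cannot be extended at its end, so its end is a leaf or isolated. -/
theorem IsAcyclic.exists_subsingleton_neighborSet {W : Type*} [Finite W] [Nonempty W]
    {H : SimpleGraph W} (hH : H.IsAcyclic) : ∃ v, (H.neighborSet v).Subsingleton := by
  obtain ⟨u, v, p, hp, hmax⟩ := Walk.exists_isPath_forall_isPath_length_le_length H
  refine ⟨v, fun a ha b hb => by_contra fun hab => ?_⟩
  obtain ⟨w, hw, hw_ne⟩ : ∃ w, H.Adj v w ∧ w ≠ p.penultimate := by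
    by_cases ha' : a = p.penultimate
    · exact ⟨b, hb, fun hb' => hab (ha'.trans hb'.symm)⟩
    · exact ⟨a, ha, ha'⟩
  have hw_supp : w ∉ p.support := fun h => hw_ne (hH.eq_penultimate_of_adj_end hp hw h)
  have := hmax _ _ _ (hp.concat hw_supp hw)
  rw [Walk.length_concat] at this
  omega

variable {G : SimpleGraph V}

theorem Subgraph.Connected.verts_subset_of_adj_closed {H : G.Subgraph} (hH : H.Connected)
    {s : Set V} (hs : ∀ x y, x ∈ s → H.Adj x y → y ∈ s) {v : V} (hvH : v ∈ H.verts)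
    (hvs : v ∈ s) : H.verts ⊆ s := by
  suffices ∀ x : H.verts, H.coe.Reachable ⟨v, hvH⟩ x → (x : V) ∈ s from
    fun w hw => this ⟨w, hw⟩ (hH.preconnected _ _)
  intro x hx
  rw [reachable_iff_reflTransGen] at hx
  induction hx with
  | refl => exact hvs
  | tail _ hadj ih => exact hs _ _ ih hadj

theorem Subgraph.Connected.adj_le_of_adj_closed {K D : G.Subgraph}
    (hK : K.Connected) (hclosed : ∀ x y z, K.Adj x y → D.Adj x y → K.Adj x z → D.Adj x z)
    (hin : ∃ x y, K.Adj x y ∧ D.Adj x y) : K.Adj ≤ D.Adj := by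
  obtain ⟨x₀, y₀, hK₀, hD₀⟩ := hin
  have hall := hK.verts_subset_of_adj_closed (s := {x | ∀ z, K.Adj x z → D.Adj x z})
    (fun x y hx hxy z => hclosed y x z hxy.symm (hx y hxy).symm) hK₀.fst_mem
    (fun z => hclosed x₀ y₀ z hK₀ hD₀)
  exact fun x y hxy => hall hxy.fst_mem y hxy

theorem Walk.IsCycle.isCycleSubgraph_toSubgraph {u : V} {Z : G.Walk u u} (hZ : Z.IsCycle) :
    IsCycleSubgraph Z.toSubgraph :=
  ⟨Z.toSubgraph_connected,
    fun _ hv => hZ.ncard_neighborSet_toSubgraph_eq_two (Z.mem_verts_toSubgraph.1 hv)⟩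

end SimpleGraph

section CycleDecomposition

variable {G : SimpleGraph V}

/-- Degree 2 on both sides forces `K` and `C` to have the same neighbourhoods wherever `K` lives,
so `K` spreads along the connected `C`. -/
theorem IsCycleSubgraph.verts_subset_of_adj_le [Finite V] {K C : G.Subgraph}
    (hC : IsCycleSubgraph C) (hK : ∀ v ∈ K.verts, (K.neighborSet v).ncard = 2)
    (hKC : K.Adj ≤ C.Adj) {v : V} (hv : v ∈ K.verts) : C.verts ⊆ K.verts := by
  have hmemC : ∀ x ∈ K.verts, x ∈ C.verts := fun x hx => by
    obtain ⟨y, hy⟩ :=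
      Set.nonempty_of_ncard_ne_zero (s := K.neighborSet x) (by rw [hK x hx]; simp)
    exact (hKC x y hy).fst_mem
  have hnbhd : ∀ x ∈ K.verts, K.neighborSet x = C.neighborSet x := fun x hx =>
    Set.eq_of_subset_of_ncard_le (fun y hy => hKC x y hy)
      (by rw [hK x hx, hC.2 x (hmemC x hx)]) (Set.toFinite _)
  refine hC.1.verts_subset_of_adj_closed (fun x y hx hxy => ?_) (hmemC v hv) hv
  have hy : y ∈ K.neighborSet x := by rw [hnbhd x hx]; exact hxy
  exact hy.snd_mem

/-- The edges of `K` inside `D` form a graph `J` of maximum degree 2, whose odd-degree vertices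
are exactly the vertices where `K` leaves `D`. There is an even number of them, and not zero:
otherwise `J` would contain every `K`-edge at each of its vertices, hence all of `K`. -/
theorem IsCycleSubgraph.nontrivial_exits [Finite V] {K D : G.Subgraph} (hK : IsCycleSubgraph K)
    (hin : ∃ x y, K.Adj x y ∧ D.Adj x y) (hout : ∃ x y, K.Adj x y ∧ ¬ D.Adj x y) :
    {u | u ∈ D.verts ∧ ∃ b, K.Adj u b ∧ ¬ D.Adj u b}.Nontrivial := by
  classical
  have := Fintype.ofFinite V
  set J : SimpleGraph V := (K ⊓ D).spanningCoe
  have hJK : ∀ x, J.neighborSet x ⊆ K.neighborSet x := fun x y hy => hy.1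
  have hKle : ∀ x, (K.neighborSet x).ncard ≤ 2 := fun x => by
    by_cases hx : x ∈ K.verts
    · exact (hK.2 x hx).le
    · rw [Set.eq_empty_of_forall_notMem (s := K.neighborSet x)
        fun y (hy : K.Adj x y) => hx hy.fst_mem, Set.ncard_empty]
      omega
  have hdeg : ∀ x, J.degree x = (J.neighborSet x).ncard := fun x => by
    rw [← card_neighborSet_eq_degree, ← Nat.card_eq_fintype_card, Nat.card_coe_set_eq]
  have hJle : ∀ x, (J.neighborSet x).ncard ≤ 2 :=
    fun x => (Set.ncard_le_ncard (hJK x)).trans (hKle x)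
  set B := Finset.univ.filter fun x => Odd (J.degree x)
  have hexit : ∀ x ∈ B, x ∈ D.verts ∧ ∃ b, K.Adj x b ∧ ¬ D.Adj x b := by
    intro x hx
    have hodd := (Finset.mem_filter.1 hx).2
    rw [hdeg, Nat.odd_iff] at hodd
    have hone : (J.neighborSet x).ncard = 1 := by have := hJle x; omega
    obtain ⟨a, ha⟩ := Set.nonempty_of_ncard_ne_zero (s := J.neighborSet x) (by omega)
    have hKx : (K.neighborSet x).ncard = 2 := hK.2 x ha.1.fst_mem
    obtain ⟨b, hbK, hbJ⟩ := Set.not_subset.1 fun h : K.neighborSet x ⊆ J.neighborSet x => by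
      have := Set.ncard_le_ncard h; omega
    exact ⟨ha.2.fst_mem, b, hbK, fun hbD => hbJ ⟨hbK, hbD⟩⟩
  have hBne : B.Nonempty := by
    by_contra hB
    obtain ⟨x, y, hxy, hnD⟩ := hout
    refine hnD (hK.1.adj_le_of_adj_closed (fun x y z hKxy hDxy hKxz => ?_) hin x y hxy)
    have heven : ¬ Odd (J.degree x) :=
      fun h => hB ⟨x, Finset.mem_filter.2 ⟨Finset.mem_univ x, h⟩⟩
    have hpos : (J.neighborSet x).ncard ≠ 0 :=
      (Set.ncard_pos (Set.toFinite _)).2 ⟨y, show J.Adj x y from ⟨hKxy, hDxy⟩⟩ |>.ne'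
    rw [hdeg, Nat.odd_iff] at heven
    have hJ : J.neighborSet x = K.neighborSet x := by
      refine Set.eq_of_subset_of_ncard_le (hJK x) ?_ (Set.toFinite _)
      have := hJle x; have := hKle x; omega
    have hz : z ∈ J.neighborSet x := by rw [hJ]; exact hKxz
    exact hz.2
  have hB2 : 1 < B.card := by
    obtain ⟨k, hk⟩ : Even B.card := J.even_card_odd_degree_vertices
    have := hBne.card_pos
    omega
  obtain ⟨v, hv, w, hw, hvw⟩ := Finset.one_lt_card.1 hB2
  exact ⟨v, hexit v hv, w, hexit w hw, hvw⟩

theorem CISimple.eq_of_mem_inter [Finite V] {𝒞 : Set G.Subgraph} (h : CISimple G 𝒞)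
    {C D : G.Subgraph} (hC : C ∈ 𝒞) (hD : D ∈ 𝒞) (hCD : C ≠ D) {v w : V}
    (hv : v ∈ C.verts ∩ D.verts) (hw : w ∈ C.verts ∩ D.verts) : v = w :=
  (Set.ncard_le_one (Set.toFinite _)).1 (h C hC D hD hCD) v hv w hw

theorem IsCycleDecomposition.exists_adj {𝒞 : Set G.Subgraph} (hdec : IsCycleDecomposition G 𝒞)
    {x y : V} (h : G.Adj x y) : ∃ C ∈ 𝒞, C.Adj x y := by
  obtain ⟨C, ⟨hC, hxy⟩, -⟩ := hdec.2 s(x, y) h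
  exact ⟨C, hC, hxy⟩

theorem IsCycleDecomposition.nontrivial_CIGraph_adj [Finite V] {𝒞 : Set G.Subgraph}
    (hdec : IsCycleDecomposition G 𝒞) (hsimple : CISimple G 𝒞) {K : G.Subgraph}
    (hK : IsCycleSubgraph K) {D : 𝒞} (hin : ∃ x y, K.Adj x y ∧ D.1.Adj x y)
    (hout : ∃ x y, K.Adj x y ∧ ¬ D.1.Adj x y) :
    {E : 𝒞 | (CIGraph G 𝒞).Adj D E ∧ ∃ x y, K.Adj x y ∧ E.1.Adj x y}.Nontrivial := by
  obtain ⟨v, ⟨hvD, b₁, hK₁, hD₁⟩, w, ⟨hwD, b₂, hK₂, hD₂⟩, hvw⟩ := hK.nontrivial_exits hin hout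
  obtain ⟨E₁, hE₁, hE₁₁⟩ := hdec.exists_adj hK₁.adj_sub
  obtain ⟨E₂, hE₂, hE₂₂⟩ := hdec.exists_adj hK₂.adj_sub
  have hne₁ : D.1 ≠ E₁ := fun h => hD₁ (h ▸ hE₁₁)
  have hne₂ : D.1 ≠ E₂ := fun h => hD₂ (h ▸ hE₂₂)
  refine ⟨⟨E₁, hE₁⟩, ⟨?_, v, b₁, hK₁, hE₁₁⟩, ⟨E₂, hE₂⟩, ⟨?_, w, b₂, hK₂, hE₂₂⟩, fun h => hvw ?_⟩
  · exact ⟨fun h => hne₁ (congrArg Subtype.val h), v, hvD, hE₁₁.fst_mem⟩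
  · exact ⟨fun h => hne₂ (congrArg Subtype.val h), w, hwD, hE₂₂.fst_mem⟩
  obtain rfl : E₁ = E₂ := congrArg Subtype.val h
  exact hsimple.eq_of_mem_inter D.2 hE₁ hne₁ ⟨hvD, hE₁₁.fst_mem⟩ ⟨hwD, hE₂₂.fst_mem⟩

theorem IsCycleDecomposition.exists_verts_subset [Finite V] {𝒞 : Set G.Subgraph}
    (hdec : IsCycleDecomposition G 𝒞) (hsimple : CISimple G 𝒞)
    (hacyc : (CIGraph G 𝒞).IsAcyclic) {K : G.Subgraph} (hK : IsCycleSubgraph K) :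
    ∃ C ∈ 𝒞, C.verts ⊆ K.verts := by
  obtain ⟨x₀, hx₀⟩ := hK.1.nonempty
  obtain ⟨y₀, hy₀⟩ := Set.nonempty_of_ncard_ne_zero (s := K.neighborSet x₀)
    (by rw [hK.2 x₀ hx₀]; simp)
  by_cases hsingle : ∃ C ∈ 𝒞, K.Adj ≤ C.Adj
  · obtain ⟨C, hC, hKC⟩ := hsingle
    exact ⟨C, hC, (hdec.1 C hC).verts_subset_of_adj_le hK.2 hKC hx₀⟩
  exfalso
  set U : Set 𝒞 := {D | ∃ x y, K.Adj x y ∧ D.1.Adj x y}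
  obtain ⟨C₀, hC₀, hC₀adj⟩ := hdec.exists_adj hy₀.adj_sub
  have : Nonempty U := ⟨⟨⟨C₀, hC₀⟩, x₀, y₀, hy₀, hC₀adj⟩⟩
  obtain ⟨⟨D, hDU⟩, hleaf⟩ := (hacyc.induce U).exists_subsingleton_neighborSet
  have hout : ∃ x y, K.Adj x y ∧ ¬ D.1.Adj x y := by
    by_contra! h
    exact hsingle ⟨D.1, D.2, fun x y hxy => h x y hxy⟩
  obtain ⟨E₁, ⟨hadj₁, hU₁⟩, E₂, ⟨hadj₂, hU₂⟩, hne⟩ :=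
    hdec.nontrivial_CIGraph_adj hsimple hK hDU hout
  exact hne (congrArg Subtype.val
    (hleaf (show (⟨E₁, hU₁⟩ : U) ∈ _ from hadj₁) (show (⟨E₂, hU₂⟩ : U) ∈ _ from hadj₂)))

theorem exists_ncard_le_forestSize_of_le_CIGraph [Finite V] {𝒞 : Set G.Subgraph}
    (hne : ∀ C ∈ 𝒞, C.verts.Nonempty) {F : SimpleGraph 𝒞} (hF : F ≤ CIGraph G 𝒞) :
    ∃ S : Set V, S.ncard ≤ forestSize F ∧ ∀ C ∈ 𝒞, (C.verts ∩ S).Nonempty := by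
  have hshared : ∀ e ∈ F.edgeSet, ∃ v, ∀ C ∈ e, v ∈ C.1.verts := by
    refine Sym2.ind fun C D hCD => ?_
    obtain ⟨v, hvC, hvD⟩ := (hF hCD).2
    exact ⟨v, fun E hE => by rcases Sym2.mem_iff.1 hE with rfl | rfl <;> assumption⟩
  choose shared hshared using hshared
  choose pick hpick using hne
  set Iso : Set 𝒞 := {C | ∀ D, ¬ F.Adj C D}
  refine ⟨Set.range (fun e : F.edgeSet => shared e e.2) ∪
    Set.range (fun C : Iso => pick C.1.1 C.1.2), ?_, fun C hC => ?_⟩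
  · refine (Set.ncard_union_le _ _).trans (add_le_add ?_ ?_) <;>
      rw [← Nat.card_coe_set_eq, ← Nat.card_coe_set_eq] <;> exact Finite.card_range_le _
  by_cases hiso : ⟨C, hC⟩ ∈ Iso
  · exact ⟨pick C hC, hpick C hC, Or.inr ⟨⟨⟨C, hC⟩, hiso⟩, rfl⟩⟩
  obtain ⟨D, hCD⟩ : ∃ D, F.Adj ⟨C, hC⟩ D := by simpa [Iso] using hiso
  exact ⟨_, hshared _ hCD _ (Sym2.mem_mk_left _ _), Or.inl ⟨⟨_, hCD⟩, rfl⟩⟩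

theorem isDecyclingSet_of_forall_isCycle {S : Set V}
    (h : ∀ u (Z : G.Walk u u), Z.IsCycle → ∃ v ∈ Z.support, v ∈ S) : IsDecyclingSet G S := by
  intro x c hc
  obtain ⟨v, hv, hvS⟩ := h _ _ (hc.map (f := (Embedding.induce (G := G) Sᶜ).toHom)
    Subtype.val_injective)
  rw [Walk.support_map] at hv
  obtain ⟨y, -, rfl⟩ := List.mem_map.1 hv
  exact y.2 hvS

end CycleDecomposition

theorem exists_forestSize_eq_MSF {W : Type*} (H : SimpleGraph W) :
    ∃ F ≤ H, F.IsAcyclic ∧ forestSize F = MSF H :=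
  Nat.sInf_mem (s := {n | ∃ F ≤ H, F.IsAcyclic ∧ forestSize F = n})
    ⟨_, ⊥, bot_le, isAcyclic_bot, rfl⟩

theorem decyclingNumber_le_MSF_of_CI_isTree_general [Fintype V]
    (G : SimpleGraph V)
    (𝒞 : Set G.Subgraph) (hdec : IsCycleDecomposition G 𝒞)
    (hsimple : CISimple G 𝒞) (htree : (CIGraph G 𝒞).IsTree) :
    decyclingNumber G ≤ MSF (CIGraph G 𝒞) := by
  obtain ⟨F, hF, -, hFsize⟩ := exists_forestSize_eq_MSF (CIGraph G 𝒞)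
  obtain ⟨S, hScard, hS⟩ :=
    exists_ncard_le_forestSize_of_le_CIGraph (fun C hC => (hdec.1 C hC).1.nonempty) hF
  have hSdec : IsDecyclingSet G S := isDecyclingSet_of_forall_isCycle fun u Z hZ => by
    obtain ⟨C, hC, hCZ⟩ :=
      hdec.exists_verts_subset hsimple htree.isAcyclic hZ.isCycleSubgraph_toSubgraph
    obtain ⟨v, hvC, hvS⟩ := hS C hC
    exact ⟨v, Z.mem_verts_toSubgraph.1 (hCZ hvC), hvS⟩
  calc decyclingNumber G ≤ S.ncard := Nat.sInf_le ⟨S, hSdec, rfl⟩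
    _ ≤ forestSize F := hScard
    _ = MSF (CIGraph G 𝒞) := hFsize

/-- If the cycle intersection graph of a cycle decomposition `𝒞` of a
connected even graph `G` is a tree, then `∇(G) ≤ |MSF(CI(G))|`, the size of a minimum
spanning forest of `CI(G)`. -/
theorem decyclingNumber_le_MSF_of_CI_isTree [Fintype V]
    (G : SimpleGraph V) (hconn : G.Connected) (heven : IsEvenGraph G)
    (𝒞 : Set G.Subgraph) (hdec : IsCycleDecomposition G 𝒞)
    (hsimple : CISimple G 𝒞) (htree : (CIGraph G 𝒞).IsTree) :
    decyclingNumber G ≤ MSF (CIGraph G 𝒞) :=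
  decyclingNumber_le_MSF_of_CI_isTree_general G 𝒞 hdec hsimple htree
end

section
/- Let G be a connected even graph and let 𝒞 be a cycle decomposition of G whose cycle intersection graph CI(G) is a tree. If S is a minimum decycling set of G, then S determines a spanning forest of CI(G) of size at most |S|: the set of edges of CI(G) whose labelling intersection vertices lie in S is acyclic, every cycle of 𝒞 contains a vertex of S, and the subgraph of CI(G) consisting of these edges together with the remaining cycles of 𝒞 as isolated vertices is a spanning forest of CI(G) whose size (edges plus isolated vertices) is at most |S|. In particular |MSF(CI(G))| ≤ ∇(G). -/
open SimpleGraph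

variable {V : Type*}

/-- The spanning subgraph of the cycle intersection graph consisting of those edges of
`CI(G)` whose labelling intersection vertex lies in `S` (all remaining cycles of `𝒞`
appear as isolated vertices, so this subgraph is spanning). -/
def labelSubgraph (G : SimpleGraph V) (𝒞 : Set G.Subgraph) (S : Set V) :
    SimpleGraph 𝒞 where
  Adj C D := C ≠ D ∧
    ((C : G.Subgraph).verts ∩ (D : G.Subgraph).verts ∩ S).Nonempty
  symm := by
    constructor
    rintro C D ⟨h1, h2⟩
    refine ⟨h1.symm, ?_⟩
    rwa [Set.inter_comm (C : G.Subgraph).verts] at h2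
  loopless := by constructor; rintro C ⟨h1, _⟩; exact h1 rfl

/-!
Every cycle of `𝒞` meets `S`, because `G - S` is acyclic. No vertex of `G` lies on three cycles
of `𝒞`, since these would form a triangle in the tree `CI(G)`. Hence choosing, for each edge of
the label subgraph, a vertex of `S` on both its cycles, and for each isolated cycle a vertex of `S`
on it, defines an injection into `S`, which bounds the size of the spanning forest.
-/

namespace IsCycleSubgraph

variable {G : SimpleGraph V} {C : G.Subgraph}

lemma coe_degree_eq_two (hC : IsCycleSubgraph C) (v : C.verts)
    [Fintype (C.coe.neighborSet v)] : C.coe.degree v = 2 := by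
  rw [← card_neighborSet_eq_degree, ← Nat.card_eq_fintype_card,
    Nat.card_congr (Subgraph.coeNeighborSetEquiv v), Nat.card_coe_set_eq]
  exact hC.2 v v.2

-- A finite tree has one edge fewer than vertices, a 2-regular graph as many edges as vertices.
lemma not_isAcyclic_coe (hC : IsCycleSubgraph C) (hfin : C.verts.Finite) :
    ¬ C.coe.IsAcyclic := by
  classical
  intro hacyc
  have := hfin.fintype
  have hedges := IsTree.card_edgeFinset ⟨hC.1.coe, hacyc⟩
  have hdegrees := C.coe.sum_degrees_eq_twice_card_edges
  simp only [hC.coe_degree_eq_two, Finset.sum_const, Finset.card_univ, smul_eq_mul] at hdegrees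
  omega

lemma exists_mem_of_isDecyclingSet (hC : IsCycleSubgraph C) (hfin : C.verts.Finite)
    {S : Set V} (hS : IsDecyclingSet G S) : ∃ v ∈ S, v ∈ C.verts := by
  by_contra! hdisj
  let f : C.coe →g G.induce Sᶜ :=
    ⟨fun x => ⟨x, fun hx => hdisj x hx x.2⟩, fun hxy => hxy.adj_sub⟩
  exact hC.not_isAcyclic_coe hfin <| hS.comap f fun x y hxy => Subtype.ext congr(($hxy).1)

end IsCycleSubgraph

section CycleIntersection

variable {G : SimpleGraph V} {𝒞 : Set G.Subgraph}

lemma eq_or_eq_of_mem_verts_of_isAcyclic (hacyc : (CIGraph G 𝒞).IsAcyclic) {A B X : 𝒞}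
    (hAB : A ≠ B) {v : V} (hA : v ∈ A.1.verts) (hB : v ∈ B.1.verts) (hX : v ∈ X.1.verts) :
    X = A ∨ X = B := by
  classical
  by_contra! hne
  refine hacyc.cliqueFree le_rfl {A, B, X} (is3Clique_triple_iff.mpr ⟨?_, ?_, ?_⟩)
  exacts [⟨hAB, v, hA, hB⟩, ⟨hne.1.symm, v, hA, hX⟩, ⟨hne.2.symm, v, hB, hX⟩]

lemma sym2_eq_of_mem_verts_of_isAcyclic (hacyc : (CIGraph G 𝒞).IsAcyclic) {A B A' B' : 𝒞}
    (hAB : A ≠ B) (hA'B' : A' ≠ B') {v : V} (hA : v ∈ A.1.verts) (hB : v ∈ B.1.verts)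
    (hA' : v ∈ A'.1.verts) (hB' : v ∈ B'.1.verts) : s(A, B) = s(A', B') := by
  rcases eq_or_eq_of_mem_verts_of_isAcyclic hacyc hAB hA hB hA' with rfl | rfl <;>
  rcases eq_or_eq_of_mem_verts_of_isAcyclic hacyc hAB hA hB hB' with rfl | rfl
  all_goals first | exact absurd rfl hA'B' | rfl | exact Sym2.eq_swap

variable {S : Set V}

lemma labelSubgraph_le_CIGraph : labelSubgraph G 𝒞 S ≤ CIGraph G 𝒞 :=
  fun _ _ h => ⟨h.1, h.2.mono Set.inter_subset_left⟩

lemma exists_label_of_mem_edgeSet {e : Sym2 𝒞} (he : e ∈ (labelSubgraph G 𝒞 S).edgeSet) :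
    ∃ v ∈ S, ∃ A B : 𝒞, A ≠ B ∧ v ∈ A.1.verts ∧ v ∈ B.1.verts ∧
      e = s(A, B) := by
  induction e using Sym2.ind with
  | _ A B =>
    obtain ⟨hAB, v, ⟨hA, hB⟩, hv⟩ := he
    exact ⟨v, hv, A, B, hAB, hA, hB, rfl⟩

lemma eq_of_mem_verts_of_isolated {C D : 𝒞} (hC : ∀ D, ¬ (labelSubgraph G 𝒞 S).Adj C D)
    {v : V} (hv : v ∈ S) (hvC : v ∈ C.1.verts) (hvD : v ∈ D.1.verts) : D = C :=
  by_contra fun hne => hC D ⟨Ne.symm hne, v, ⟨hvC, hvD⟩, hv⟩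

theorem forestSize_labelSubgraph_le (hacyc : (CIGraph G 𝒞).IsAcyclic)
    (hmeet : ∀ C ∈ 𝒞, ∃ v ∈ S, v ∈ C.verts) (hS : S.Finite) :
    forestSize (labelSubgraph G 𝒞 S) ≤ S.ncard := by
  set L := labelSubgraph G 𝒞 S
  set I := {C : 𝒞 | ∀ D, ¬ L.Adj C D}
  choose edgeLabel hedgeS A B hAB hA hB he using
    fun e : L.edgeSet => exists_label_of_mem_edgeSet e.2
  choose isoLabel hisoS hiso using fun C : I => hmeet C.1 C.1.2
  let label : L.edgeSet ⊕ I → S :=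
    Sum.elim (fun e => ⟨edgeLabel e, hedgeS e⟩) (fun C => ⟨isoLabel C, hisoS C⟩)
  have hlabel : Function.Injective label := by
    refine Function.Injective.sumElim ?_ ?_ ?_
    · intro e e' hee'
      have hv : edgeLabel e = edgeLabel e' := congr_arg Subtype.val hee'
      refine Subtype.ext ?_
      rw [he e, he e']
      exact sym2_eq_of_mem_verts_of_isAcyclic hacyc (hAB e) (hAB e') (hA e) (hB e)
        (hv ▸ hA e') (hv ▸ hB e')
    · intro C C' hCC'
      have hv : isoLabel C = isoLabel C' := congr_arg Subtype.val hCC'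
      exact Subtype.ext (eq_of_mem_verts_of_isolated C'.2 (hisoS C') (hiso C') (hv ▸ hiso C))
    · intro e C hlab
      have hv : edgeLabel e = isoLabel C := congr_arg Subtype.val hlab
      have hAC : A e = C := eq_of_mem_verts_of_isolated C.2 (hisoS C) (hiso C) (hv ▸ hA e)
      have hBC : B e = C := eq_of_mem_verts_of_isolated C.2 (hisoS C) (hiso C) (hv ▸ hB e)
      exact hAB e (hAC.trans hBC.symm)
  have := hS.to_subtype
  have := Finite.of_injective label hlabel
  have : Finite L.edgeSet := .sum_left I
  have : Finite I := .sum_right L.edgeSet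
  have hcard := Nat.card_le_card_of_injective label hlabel
  rwa [Nat.card_sum, Nat.card_coe_set_eq, Nat.card_coe_set_eq, Nat.card_coe_set_eq] at hcard

end CycleIntersection

theorem minDecyclingSet_gives_spanningForest_of_CI_isTree_general [Fintype V]
    (G : SimpleGraph V)
    (𝒞 : Set G.Subgraph) (hdec : IsCycleDecomposition G 𝒞)
    (htree : (CIGraph G 𝒞).IsTree)
    (S : Set V) (hS : IsDecyclingSet G S) (hmin : S.ncard = decyclingNumber G) :
    labelSubgraph G 𝒞 S ≤ CIGraph G 𝒞 ∧
    (labelSubgraph G 𝒞 S).IsAcyclic ∧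
    (∀ C ∈ 𝒞, ∃ v ∈ S, v ∈ SimpleGraph.Subgraph.verts C) ∧
    forestSize (labelSubgraph G 𝒞 S) ≤ S.ncard ∧
    MSF (CIGraph G 𝒞) ≤ decyclingNumber G := by
  have hmeet : ∀ C ∈ 𝒞, ∃ v ∈ S, v ∈ C.verts := fun C hC =>
    (hdec.1 C hC).exists_mem_of_isDecyclingSet (Set.toFinite _) hS
  have hsize := forestSize_labelSubgraph_le htree.2 hmeet (Set.toFinite S)
  have hle : labelSubgraph G 𝒞 S ≤ CIGraph G 𝒞 := labelSubgraph_le_CIGraph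
  have hacyc := htree.2.anti hle
  refine ⟨hle, hacyc, hmeet, hsize, ?_⟩
  calc MSF (CIGraph G 𝒞)
      ≤ forestSize (labelSubgraph G 𝒞 S) := Nat.sInf_le ⟨_, hle, hacyc, rfl⟩
    _ ≤ S.ncard := hsize
    _ = decyclingNumber G := hmin

/-- Let `𝒞` be a cycle decomposition of a connected even graph `G` whose
cycle intersection graph is a tree, and let `S` be a minimum decycling set of `G`.  Then
the edges of `CI(G)` labelled by vertices of `S` form a subgraph of `CI(G)` which is acyclic,
every cycle of `𝒞` contains a vertex of `S`, the resulting spanning forest of `CI(G)` has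
size (edges plus isolated vertices) at most `|S|`, and in particular
`|MSF(CI(G))| ≤ ∇(G)`. -/
theorem minDecyclingSet_gives_spanningForest_of_CI_isTree [Fintype V]
    (G : SimpleGraph V) (hconn : G.Connected) (heven : IsEvenGraph G)
    (𝒞 : Set G.Subgraph) (hdec : IsCycleDecomposition G 𝒞)
    (hsimple : CISimple G 𝒞) (htree : (CIGraph G 𝒞).IsTree)
    (S : Set V) (hS : IsDecyclingSet G S) (hmin : S.ncard = decyclingNumber G) :
    labelSubgraph G 𝒞 S ≤ CIGraph G 𝒞 ∧
    (labelSubgraph G 𝒞 S).IsAcyclic ∧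
    (∀ C ∈ 𝒞, ∃ v ∈ S, v ∈ SimpleGraph.Subgraph.verts C) ∧
    forestSize (labelSubgraph G 𝒞 S) ≤ S.ncard ∧
    MSF (CIGraph G 𝒞) ≤ decyclingNumber G :=
  minDecyclingSet_gives_spanningForest_of_CI_isTree_general G 𝒞 hdec htree S hS hmin
end

section
/- Let G be a connected even graph and let 𝒞 be a cycle decomposition of G whose cycle intersection graph CI(G) is simple. Let S_CI be a subset of the edges of CI(G) whose removal from CI(G) leaves a spanning tree of CI(G), and let S_G be the set of intersection vertices of G labelling the edges of S_CI. Then in the graph G′ = G − S_G, every edge of G′ lies on at most one cycle of G′. -/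
open SimpleGraph

variable {V : Type*}

/-!
Label each edge of a cycle `H` of `G − S_G` by the cycle of `𝒞` containing it. At a vertex
`w` of `H` the two labels are equal or, as `w ∉ S_G`, adjacent in the tree
`T = CI(G) − S_CI`. If the labels `X ≠ Y` differ at `u`, cut `T` at the edge `XY`: the edges
of `H` labelled on the side of `X` form a subgraph in which `u` has odd degree, so by the
handshake lemma some other vertex `w` of `H` also changes sides. That forces the tree edge
`XY` again, so `w ∈ X ∩ Y = {u}`. Hence all of `H` lies on a single cycle `X` of `𝒞`, and two
cycles of `G − S_G` inside the 2-regular `X` that share an edge coincide.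
-/

theorem Set.odd_ncard_inter_iff_of_ncard_eq_two {α : Type*} {N : Set α} (hN : N.ncard = 2)
    (Q : Set α) : Odd (N ∩ Q).ncard ↔ ∃ p q, p ∈ N ∧ q ∈ N ∧ p ∈ Q ∧ q ∉ Q := by
  obtain ⟨x, y, hxy, rfl⟩ := Set.ncard_eq_two.1 hN
  by_cases hx : x ∈ Q <;> by_cases hy : y ∈ Q <;>
    simp [Set.insert_inter_of_mem, Set.insert_inter_of_notMem, Set.ncard_pair hxy, hx, hy]

namespace SimpleGraph.Subgraph

variable {W : Type*} {G : SimpleGraph W}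

theorem Connected.verts_subset_of_forall_adj {H : G.Subgraph} (hH : H.Connected) {s : Set W}
    {v₀ : W} (hv₀ : v₀ ∈ H.verts) (hs₀ : v₀ ∈ s) (hs : ∀ v w, v ∈ s → H.Adj v w → w ∈ s) :
    H.verts ⊆ s := by
  intro v hv
  obtain ⟨p⟩ := hH.preconnected ⟨v₀, hv₀⟩ ⟨v, hv⟩
  suffices ∀ x y : H.verts, H.coe.Walk x y → (x : W) ∈ s → (y : W) ∈ s from this _ _ p hs₀
  intro x y q
  induction q with
  | nil => exact id
  | cons hxz _ ih => exact fun hx => ih (hs _ _ hx hxz)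

theorem eq_of_connected_of_neighborSet_eq {H₁ H₂ : G.Subgraph} (h₁ : H₁.Connected)
    (h₂ : H₂.Connected) {v₀ : W} (hv₁ : v₀ ∈ H₁.verts) (hv₂ : v₀ ∈ H₂.verts)
    (hnbr : ∀ v ∈ H₁.verts, v ∈ H₂.verts → H₁.neighborSet v = H₂.neighborSet v) : H₁ = H₂ := by
  have hverts : H₁.verts = H₂.verts := by
    refine (h₁.verts_subset_of_forall_adj hv₁ hv₂ fun v w hv hvw => ?_).antisymm
      (h₂.verts_subset_of_forall_adj hv₂ hv₁ fun v w hv hvw => ?_)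
    · have : w ∈ H₂.neighborSet v := hnbr v hvw.fst_mem hv ▸ hvw
      exact this.snd_mem
    · have : w ∈ H₁.neighborSet v := (hnbr v hv hvw.fst_mem).symm ▸ hvw
      exact this.snd_mem
  refine Subgraph.ext hverts (funext₂ fun v w => propext ⟨fun h => ?_, fun h => ?_⟩)
  · exact (hnbr v h.fst_mem (hverts ▸ h.fst_mem)).subst (motive := (w ∈ ·)) h
  · exact (hnbr v (hverts ▸ h.fst_mem) h.fst_mem).symm.subst (motive := (w ∈ ·)) h

theorem Connected.label_eq_of_forall_adj {ι : Type*} {H : G.Subgraph} (hH : H.Connected)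
    (f : Sym2 W → ι) (hf : ∀ v a b, H.Adj v a → H.Adj v b → f s(v, a) = f s(v, b))
    {a b x y : W} (hab : H.Adj a b) (hxy : H.Adj x y) : f s(a, b) = f s(x, y) := by
  have hsub := hH.verts_subset_of_forall_adj (s := {v | ∀ w, H.Adj v w → f s(v, w) = f s(a, b)})
    hab.fst_mem (fun w haw => hf a w b haw hab) fun v w hv hvw u hwu => by
      rw [hf w u v hwu hvw.symm, Sym2.eq_swap]; exact hv w hvw
  exact (hsub hxy.fst_mem y hxy).symm

theorem exists_ne_crossing_of_crossing [Finite W] {H : G.Subgraph}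
    (hH : ∀ v ∈ H.verts, (H.neighborSet v).ncard = 2) (P : Set (Sym2 W)) {u a b : W}
    (hua : H.Adj u a) (hub : H.Adj u b) (ha : s(u, a) ∈ P) (hb : s(u, b) ∉ P) :
    ∃ w ≠ u, ∃ p q, H.Adj w p ∧ H.Adj w q ∧ s(w, p) ∈ P ∧ s(w, q) ∉ P := by
  classical
  have := Fintype.ofFinite W
  -- the vertices of odd degree in the `P`-part of `H` are exactly those where `H` crosses `P`
  let K := H.spanningCoe.deleteEdges Pᶜ
  have hodd : ∀ v ∈ H.verts, Odd (K.degree v) ↔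
      ∃ p q, H.Adj v p ∧ H.Adj v q ∧ s(v, p) ∈ P ∧ s(v, q) ∉ P := by
    intro v hv
    have hK : K.neighborSet v = H.neighborSet v ∩ {x | s(v, x) ∈ P} := by
      ext x; simp [K]
    rw [← card_neighborFinset_eq_degree, ← Set.ncard_coe_finset, coe_neighborFinset, hK,
      Set.odd_ncard_inter_iff_of_ncard_eq_two (hH v hv)]
    rfl
  obtain ⟨w, hwu, hw⟩ := K.exists_ne_odd_degree_of_exists_odd_degree u
    ((hodd u hua.fst_mem).2 ⟨a, b, hua, hub, ha, hb⟩)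
  obtain ⟨x, hx⟩ := K.degree_pos_iff_exists_adj w |>.1 hw.pos
  exact ⟨w, hwu, (hodd w (by simpa [K] using hx.1.fst_mem)).1 hw⟩

theorem label_eq_of_isAcyclic [Finite W] {H : G.Subgraph}
    (hH : ∀ v ∈ H.verts, (H.neighborSet v).ncard = 2) {ι : Type*} {T : SimpleGraph ι}
    (hT : T.IsAcyclic) (f : Sym2 W → ι)
    (hadj : ∀ w p q, H.Adj w p → H.Adj w q → f s(w, p) ≠ f s(w, q) →
      T.Adj (f s(w, p)) (f s(w, q)))
    (hunique : ∀ u a b w p q, H.Adj u a → H.Adj u b → H.Adj w p → H.Adj w q →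
      f s(u, a) ≠ f s(u, b) → s(f s(w, p), f s(w, q)) = s(f s(u, a), f s(u, b)) → w = u)
    {u a b : W} (hua : H.Adj u a) (hub : H.Adj u b) : f s(u, a) = f s(u, b) := by
  by_contra hne
  set X := f s(u, a)
  set Y := f s(u, b)
  let T' := T.deleteEdges {s(X, Y)}
  have hbridge : ¬ T'.Reachable X Y :=
    isAcyclic_iff_forall_adj_isBridge.1 hT (hadj u a b hua hub hne)
  -- `H` crosses from the side of `X` to the side of `Y` at `u`, so it crosses back elsewhere
  obtain ⟨w, hwu, p, q, hwp, hwq, hp, hq⟩ := exists_ne_crossing_of_crossing hH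
    {e | T'.Reachable X (f e)} hua hub (Reachable.refl X) hbridge
  have hpq : f s(w, p) ≠ f s(w, q) := fun h => hq (show T'.Reachable X (f s(w, q)) from h ▸ hp)
  refine hwu (hunique u a b w p q hua hub hwp hwq hne (not_not.1 fun hXY => hq ?_))
  exact hp.trans
    (SimpleGraph.deleteEdges_adj.2 ⟨hadj w p q hwp hwq hpq, hXY⟩ : T'.Adj _ _).reachable

end SimpleGraph.Subgraph

section CycleDecomposition

variable {G : SimpleGraph V} {𝒞 : Set G.Subgraph}

/-- The cycle of `𝒞` through `e`; an arbitrary cycle of `𝒞` if there is none. -/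
noncomputable def cycleThrough (𝒞 : Set G.Subgraph) [Nonempty 𝒞] (e : Sym2 V) : 𝒞 :=
  Classical.epsilon fun C : 𝒞 => e ∈ (C : G.Subgraph).edgeSet

theorem IsCycleDecomposition.mem_edgeSet_cycleThrough (hdec : IsCycleDecomposition G 𝒞)
    [Nonempty 𝒞] {e : Sym2 V} (he : e ∈ G.edgeSet) :
    e ∈ (cycleThrough 𝒞 e : G.Subgraph).edgeSet := by
  obtain ⟨C, ⟨hC, heC⟩, -⟩ := hdec.2 e he
  exact Classical.epsilon_spec (p := fun C : 𝒞 => e ∈ (C : G.Subgraph).edgeSet) ⟨⟨C, hC⟩, heC⟩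

theorem IsCycleDecomposition.cycleThrough_eq (hdec : IsCycleDecomposition G 𝒞) [Nonempty 𝒞]
    {C : G.Subgraph} (hC : C ∈ 𝒞) {e : Sym2 V} (he : e ∈ C.edgeSet) :
    cycleThrough 𝒞 e = ⟨C, hC⟩ :=
  Subtype.ext <| (hdec.2 e (C.edgeSet_subset he)).unique
    ⟨(cycleThrough 𝒞 e).2, hdec.mem_edgeSet_cycleThrough (C.edgeSet_subset he)⟩ ⟨hC, he⟩

theorem IsCycleDecomposition.cycleThrough_eq_of_adj_of_adj [Finite V]
    (hdec : IsCycleDecomposition G 𝒞) (hsimple : CISimple G 𝒞) [Nonempty 𝒞]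
    {S_CI : Set (Sym2 𝒞)} (hT : ((CIGraph G 𝒞).deleteEdges S_CI).IsAcyclic) {S : Set V}
    (hS : ∀ C D : 𝒞, s(C, D) ∈ S_CI → (C : G.Subgraph).verts ∩ (D : G.Subgraph).verts ⊆ S)
    {H : (G.induce Sᶜ).Subgraph} (hH : ∀ v ∈ H.verts, (H.neighborSet v).ncard = 2)
    {u a b : ↥Sᶜ} (hua : H.Adj u a) (hub : H.Adj u b) :
    cycleThrough 𝒞 s(↑u, ↑a) = cycleThrough 𝒞 s(↑u, ↑b) := by
  have hmem : ∀ {w p : ↥Sᶜ}, H.Adj w p → (w : V) ∈ (cycleThrough 𝒞 s(↑w, ↑p) : G.Subgraph).verts :=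
    fun h => (Subgraph.mem_edgeSet.1 (hdec.mem_edgeSet_cycleThrough (H.adj_sub h))).fst_mem
  refine Subgraph.label_eq_of_isAcyclic hH hT (fun e => cycleThrough 𝒞 (e.map Subtype.val))
    (fun w p q hwp hwq hne => ?_) (fun u a b w p q hua hub hwp hwq hne heq => ?_) hua hub
  · exact deleteEdges_adj.2 ⟨⟨hne, _, hmem hwp, hmem hwq⟩,
      fun h => w.2 (hS _ _ h ⟨hmem hwp, hmem hwq⟩)⟩
  · -- both `u` and `w` lie on the two cycles labelling the edges at `u`, which meet only once
    have hw : (w : V) ∈ (cycleThrough 𝒞 s(↑u, ↑a) : G.Subgraph).verts ∩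
        (cycleThrough 𝒞 s(↑u, ↑b) : G.Subgraph).verts := by
      rcases Sym2.eq_iff.1 heq with ⟨hp, hq⟩ | ⟨hp, hq⟩
      · exact ⟨hp ▸ hmem hwp, hq ▸ hmem hwq⟩
      · exact ⟨hq ▸ hmem hwq, hp ▸ hmem hwp⟩
    exact Subtype.ext <| (Set.ncard_le_one (Set.toFinite _)).1
      (hsimple _ (Subtype.prop _) _ (Subtype.prop _) (Subtype.coe_injective.ne hne)) _ hw _
      ⟨hmem hua, hmem hub⟩

theorem IsCycleDecomposition.adj_of_isCycleSubgraph_induce [Finite V]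
    (hdec : IsCycleDecomposition G 𝒞) (hsimple : CISimple G 𝒞)
    {S_CI : Set (Sym2 𝒞)} (hT : ((CIGraph G 𝒞).deleteEdges S_CI).IsAcyclic) {S : Set V}
    (hS : ∀ C D : 𝒞, s(C, D) ∈ S_CI → (C : G.Subgraph).verts ∩ (D : G.Subgraph).verts ⊆ S)
    {H : (G.induce Sᶜ).Subgraph} (hH : IsCycleSubgraph H) {C : G.Subgraph} (hC : C ∈ 𝒞)
    {a b : ↥Sᶜ} (hab : H.Adj a b) (hCab : C.Adj a b) {x y : ↥Sᶜ} (hxy : H.Adj x y) :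
    C.Adj x y := by
  have : Nonempty 𝒞 := ⟨⟨C, hC⟩⟩
  have hlabel := hH.1.label_eq_of_forall_adj (fun e => cycleThrough 𝒞 (e.map Subtype.val))
    (fun _ _ _ => hdec.cycleThrough_eq_of_adj_of_adj hsimple hT hS hH.2) hab hxy
  have hxyC := hdec.mem_edgeSet_cycleThrough (e := s(↑x, ↑y)) (H.adj_sub hxy)
  rwa [← show cycleThrough 𝒞 s(↑a, ↑b) = cycleThrough 𝒞 s(↑x, ↑y) from hlabel,
    hdec.cycleThrough_eq hC hCab] at hxyC

end CycleDecomposition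

theorem SimpleGraph.Subgraph.image_val_neighborSet_eq {G : SimpleGraph V} {s : Set V}
    {H : (G.induce s).Subgraph} {X : G.Subgraph}
    (hX : ∀ v ∈ X.verts, (X.neighborSet v).ncard = 2) (hHX : ∀ x y, H.Adj x y → X.Adj x y)
    {v : s} (hv : (H.neighborSet v).ncard = 2) :
    Subtype.val '' H.neighborSet v = X.neighborSet v := by
  obtain ⟨w, hw⟩ := Set.nonempty_of_ncard_ne_zero (hv ▸ two_ne_zero : (H.neighborSet v).ncard ≠ 0)
  have hXv := hX v (hHX _ _ hw).fst_mem
  refine Set.eq_of_subset_of_ncard_le (Set.image_subset_iff.2 fun w hw => hHX _ _ hw) ?_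
    (Set.finite_of_ncard_ne_zero (hXv ▸ two_ne_zero))
  rw [Set.ncard_image_of_injective _ Subtype.val_injective, hv, hXv]

theorem edge_in_at_most_one_cycle_after_removal_general [Fintype V]
    (G : SimpleGraph V)
    (𝒞 : Set G.Subgraph) (hdec : IsCycleDecomposition G 𝒞)
    (hsimple : CISimple G 𝒞)
    (S_CI : Set (Sym2 𝒞))
    (htree : ((CIGraph G 𝒞).deleteEdges S_CI).IsTree)
    (S_G : Set V)
    (hSG : S_G = {v : V | ∃ C D : 𝒞, s(C, D) ∈ S_CI ∧
      v ∈ (C : G.Subgraph).verts ∩ (D : G.Subgraph).verts}) :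
    ∀ H₁ H₂ : (G.induce S_Gᶜ).Subgraph,
      IsCycleSubgraph H₁ → IsCycleSubgraph H₂ →
      ∀ e, e ∈ H₁.edgeSet → e ∈ H₂.edgeSet → H₁ = H₂ := by
  intro H₁ H₂ h₁ h₂ e he₁ he₂
  induction e using Sym2.ind with | _ a b => ?_
  obtain ⟨X, ⟨hX, hXab⟩, -⟩ := hdec.2 s(↑a, ↑b) (H₁.adj_sub he₁)
  have hS : ∀ C D : 𝒞, s(C, D) ∈ S_CI → (C : G.Subgraph).verts ∩ (D : G.Subgraph).verts ⊆ S_G :=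
    fun C D h v hv => hSG ▸ ⟨C, D, h, hv⟩
  have hHX : ∀ {H : (G.induce S_Gᶜ).Subgraph}, IsCycleSubgraph H → H.Adj a b →
      ∀ x y, H.Adj x y → X.Adj x y := fun hH hab _ _ =>
    hdec.adj_of_isCycleSubgraph_induce hsimple htree.isAcyclic hS hH hX hab hXab
  refine Subgraph.eq_of_connected_of_neighborSet_eq h₁.1 h₂.1 he₁.fst_mem he₂.fst_mem
    fun v hv₁ hv₂ => Set.image_injective.2 Subtype.val_injective ?_
  rw [Subgraph.image_val_neighborSet_eq (hdec.1 X hX).2 (hHX h₁ he₁) (h₁.2 v hv₁),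
    Subgraph.image_val_neighborSet_eq (hdec.1 X hX).2 (hHX h₂ he₂) (h₂.2 v hv₂)]

/-- Let `G` be a connected even graph and `𝒞` a cycle decomposition of `G`
whose cycle intersection graph is simple.  Let `S_CI` be a set of edges of `CI(G)` whose
removal leaves a spanning tree of `CI(G)`, and let `S_G` be the set of intersection
vertices of `G` labelling the edges of `S_CI`.  Then in `G′ = G − S_G` every edge lies on
at most one cycle of `G′`: any two cycle subgraphs of `G′` sharing an edge coincide. -/
theorem edge_in_at_most_one_cycle_after_removal [Fintype V]
    (G : SimpleGraph V) (hconn : G.Connected) (heven : IsEvenGraph G)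
    (𝒞 : Set G.Subgraph) (hdec : IsCycleDecomposition G 𝒞)
    (hsimple : CISimple G 𝒞)
    (S_CI : Set (Sym2 𝒞)) (hsub : S_CI ⊆ (CIGraph G 𝒞).edgeSet)
    (htree : ((CIGraph G 𝒞).deleteEdges S_CI).IsTree)
    (S_G : Set V)
    (hSG : S_G = {v : V | ∃ C D : 𝒞, s(C, D) ∈ S_CI ∧
      v ∈ (C : G.Subgraph).verts ∩ (D : G.Subgraph).verts}) :
    ∀ H₁ H₂ : (G.induce S_Gᶜ).Subgraph,
      IsCycleSubgraph H₁ → IsCycleSubgraph H₂ →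
      ∀ e, e ∈ H₁.edgeSet → e ∈ H₂.edgeSet → H₁ = H₂ :=
  edge_in_at_most_one_cycle_after_removal_general G 𝒞 hdec hsimple S_CI htree S_G hSG
end
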